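/- Let V = {V_i}_{i=1}^m be a projective protocol for ℂ^d (S_V = I) such that ‖V_i* V_i‖_F = v_i² √(k_i) is constant in i. Then V is its own canonical dual, and it is the unique dual minimizing the worst-case error max_i ‖W_i* V_i‖_F. -/

import Mathlib

/-!
Write `Xᵢ = VᵢᴴVᵢ` and `Yᵢ = WᵢᴴVᵢ` for a dual `W`. Since `VᵢVᵢᴴ = vᵢ² I`, the Frobenius inner
product is `⟪Xᵢ, Yᵢ⟫ = vᵢ² tr Yᵢ`, and `∑ᵢ tr Yᵢ = tr I = d` for every dual. This gives the weighted
Pythagoras identity `∑ ‖Yᵢ - Xᵢ‖²/vᵢ² = ∑ ‖Yᵢ‖²/vᵢ² - ∑ ‖Xᵢ‖²/vᵢ²`. As `‖Xᵢ‖ = c` for all `i`, its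
right side is at most `(N(W)² - c²) ∑ 1/vᵢ²`, so `N(W) ≥ c = N(V)`, with equality only if every
`Yᵢ = Xᵢ`, which forces `W = V`.
-/

open scoped Matrix ComplexOrder

/-- The Frobenius norm of a complex matrix. -/
noncomputable def frob {m n : ℕ} (A : Matrix (Fin m) (Fin n) ℂ) : ℝ :=
  Real.sqrt ((Matrix.trace (Aᴴ * A)).re)

open Matrix

lemma re_trace_conjTranspose_mul_self_nonneg {m n : Type*} [Fintype m] [Fintype n]
    (A : Matrix m n ℂ) : 0 ≤ (Aᴴ * A).trace.re :=
  (Complex.nonneg_iff.mp (posSemidef_conjTranspose_mul_self A).trace_nonneg).1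

lemma frob_nonneg {m n : ℕ} (A : Matrix (Fin m) (Fin n) ℂ) : 0 ≤ frob A :=
  Real.sqrt_nonneg _

lemma frob_sq {m n : ℕ} (A : Matrix (Fin m) (Fin n) ℂ) : frob A ^ 2 = (Aᴴ * A).trace.re :=
  Real.sq_sqrt (re_trace_conjTranspose_mul_self_nonneg A)

lemma frob_eq_zero_iff {m n : ℕ} {A : Matrix (Fin m) (Fin n) ℂ} : frob A = 0 ↔ A = 0 := by
  rw [← trace_conjTranspose_mul_self_eq_zero_iff, frob,
    Real.sqrt_eq_zero (re_trace_conjTranspose_mul_self_nonneg A)]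
  have him := (Complex.nonneg_iff.mp (posSemidef_conjTranspose_mul_self A).trace_nonneg).2
  exact ⟨fun h => Complex.ext h him.symm, fun h => by simp [h]⟩

section projective

variable {m n : Type*} [Fintype m] [DecidableEq m] [Fintype n] {V : Matrix m n ℂ} {a : ℂ}

lemma trace_conjTranspose_mul_self_conjTranspose_mul (hV : V * Vᴴ = a • 1)
    (W : Matrix m n ℂ) : ((Vᴴ * V)ᴴ * (Wᴴ * V)).trace = a * (Wᴴ * V).trace := by
  rw [conjTranspose_mul, conjTranspose_conjTranspose, Matrix.mul_assoc, trace_mul_comm,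
    Matrix.mul_assoc, Matrix.mul_assoc, hV, Matrix.mul_smul, Matrix.mul_one, Matrix.mul_smul,
    trace_smul, trace_mul_comm, smul_eq_mul]

lemma eq_of_conjTranspose_mul_eq (ha : a ≠ 0) (hV : V * Vᴴ = a • 1) {W : Matrix m n ℂ}
    (h : Wᴴ * V = Vᴴ * V) : W = V := by
  have h' := congrArg (· * Vᴴ) h
  simp only [Matrix.mul_assoc, hV, Matrix.mul_smul, Matrix.mul_one] at h'
  simpa using congrArg conjTranspose (smul_right_injective _ ha h')

end projective

lemma frob_sq_conjTranspose_mul_sub {k d : ℕ} {V : Matrix (Fin k) (Fin d) ℂ} {a : ℝ}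
    (hV : V * Vᴴ = (a : ℂ) • 1) (W : Matrix (Fin k) (Fin d) ℂ) :
    frob (Wᴴ * V - Vᴴ * V) ^ 2 =
      frob (Wᴴ * V) ^ 2 - 2 * a * (Wᴴ * V).trace.re + a * (Vᴴ * V).trace.re := by
  have hXY := trace_conjTranspose_mul_self_conjTranspose_mul hV W
  have hYX : ((Wᴴ * V)ᴴ * (Vᴴ * V)).trace = star (a * (Wᴴ * V).trace) := by
    rw [← hXY, ← trace_conjTranspose]
    simp only [conjTranspose_mul, conjTranspose_conjTranspose]
  have hXX := trace_conjTranspose_mul_self_conjTranspose_mul hV V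
  rw [frob_sq, frob_sq, conjTranspose_sub, sub_mul, mul_sub, mul_sub, trace_sub, trace_sub,
    trace_sub, hXY, hYX, hXX]
  simp only [Complex.sub_re, Complex.star_def, Complex.conj_re, Complex.re_ofReal_mul]
  ring

lemma sum_re_trace_eq_of_dual {ι : Type*} [Fintype ι] {d : ℕ} {k : ι → ℕ}
    {V W : ∀ i, Matrix (Fin (k i)) (Fin d) ℂ} (hW : ∑ i, (W i)ᴴ * V i = 1) :
    ∑ i, ((W i)ᴴ * V i).trace.re = d := by
  rw [← Complex.re_sum, ← trace_sum, hW, trace_one, Fintype.card_fin, Complex.natCast_re]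

lemma sum_frob_sq_conjTranspose_mul_sub_div {ι : Type*} [Fintype ι] {d : ℕ} {k : ι → ℕ}
    {V : ∀ i, Matrix (Fin (k i)) (Fin d) ℂ} {a : ι → ℝ} (ha : ∀ i, a i ≠ 0)
    (hV : ∀ i, V i * (V i)ᴴ = (a i : ℂ) • 1) (hVV : ∑ i, (V i)ᴴ * V i = 1)
    {W : ∀ i, Matrix (Fin (k i)) (Fin d) ℂ} (hW : ∑ i, (W i)ᴴ * V i = 1) :
    ∑ i, frob ((W i)ᴴ * V i - (V i)ᴴ * V i) ^ 2 / a i =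
      ∑ i, frob ((W i)ᴴ * V i) ^ 2 / a i - ∑ i, frob ((V i)ᴴ * V i) ^ 2 / a i := by
  have hX : ∀ i, frob ((V i)ᴴ * V i) ^ 2 / a i = ((V i)ᴴ * V i).trace.re := fun i => by
    have h := frob_sq_conjTranspose_mul_sub (hV i) (V i)
    rw [sub_self, frob_eq_zero_iff.mpr rfl] at h
    field_simp [ha i]
    linarith
  have hYX : ∀ i, frob ((W i)ᴴ * V i - (V i)ᴴ * V i) ^ 2 / a i =
      frob ((W i)ᴴ * V i) ^ 2 / a i - 2 * ((W i)ᴴ * V i).trace.re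
        + ((V i)ᴴ * V i).trace.re := fun i => by
    rw [frob_sq_conjTranspose_mul_sub (hV i)]
    field_simp [ha i]
  simp only [hYX, hX, Finset.sum_add_distrib, Finset.sum_sub_distrib, ← Finset.mul_sum,
    sum_re_trace_eq_of_dual hW, sum_re_trace_eq_of_dual hVV]
  ring

lemma sum_frob_sq_conjTranspose_mul_sub_div_le {ι : Type*} [Fintype ι] {d : ℕ} {k : ι → ℕ}
    {V : ∀ i, Matrix (Fin (k i)) (Fin d) ℂ} {a : ι → ℝ} (ha : ∀ i, 0 < a i)
    (hV : ∀ i, V i * (V i)ᴴ = (a i : ℂ) • 1) (hVV : ∑ i, (V i)ᴴ * V i = 1) {c b : ℝ}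
    (hc : ∀ i, frob ((V i)ᴴ * V i) = c) {W : ∀ i, Matrix (Fin (k i)) (Fin d) ℂ}
    (hW : ∑ i, (W i)ᴴ * V i = 1) (hb : ∀ i, frob ((W i)ᴴ * V i) ≤ b) :
    ∑ i, frob ((W i)ᴴ * V i - (V i)ᴴ * V i) ^ 2 / a i ≤ (b ^ 2 - c ^ 2) * ∑ i, 1 / a i := by
  rw [sum_frob_sq_conjTranspose_mul_sub_div (fun i => (ha i).ne') hV hVV hW, Finset.mul_sum]
  simp only [hc, mul_one_div, sub_div, Finset.sum_sub_distrib]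
  gcongr with i
  exacts [(ha i).le, frob_nonneg _, hb i]

open Finset in
theorem projective_protocol_self_dual_optimal_wce_general
    {d m : ℕ} (hm : 0 < m) (k : Fin m → ℕ)
    (V : ∀ i, Matrix (Fin (k i)) (Fin d) ℂ)
    (v : Fin m → ℝ) (hv : ∀ i, 0 < v i)
    (hproj : ∀ i, V i * (V i)ᴴ = (((v i) ^ 2 : ℝ) : ℂ) • 1)
    (hprot : (∑ i, (V i)ᴴ * V i) = 1)
    (c : ℝ)
    (hconst : ∀ i, frob ((V i)ᴴ * V i) = c)
    (N : (∀ i, Matrix (Fin (k i)) (Fin d) ℂ) → ℝ)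
    (hN : ∀ W, N W = Finset.univ.sup'
      (Finset.univ_nonempty_iff.mpr ⟨⟨0, hm⟩⟩) (fun i => frob ((W i)ᴴ * V i))) :
    -- `V` is its own canonical dual
    (∀ i, V i * (∑ j, (V j)ᴴ * V j)⁻¹ = V i) ∧
    (∑ i, (V i)ᴴ * V i) = 1 ∧
    (∀ W : ∀ i, Matrix (Fin (k i)) (Fin d) ℂ, (∑ i, (W i)ᴴ * V i) = 1 →
      N V ≤ N W) ∧
    (∀ W : ∀ i, Matrix (Fin (k i)) (Fin d) ℂ, (∑ i, (W i)ᴴ * V i) = 1 →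
      (∀ W' : ∀ i, Matrix (Fin (k i)) (Fin d) ℂ,
        (∑ i, (W' i)ᴴ * V i) = 1 → N W ≤ N W') → W = V) := by
  have hv2 : ∀ i, 0 < v i ^ 2 := fun i => pow_pos (hv i) 2
  have hfrob_le : ∀ W i, frob ((W i)ᴴ * V i) ≤ N W := fun W i =>
    hN W ▸ le_sup' (fun i => frob ((W i)ᴴ * V i)) (mem_univ i)
  have hN_nonneg : ∀ W, 0 ≤ N W := fun W => (frob_nonneg _).trans (hfrob_le W ⟨0, hm⟩)
  have hNV : N V = c := by simp only [hN, hconst, sup'_const]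
  have hc : 0 ≤ c := hconst ⟨0, hm⟩ ▸ frob_nonneg _
  have ht : 0 < ∑ i, 1 / v i ^ 2 :=
    sum_pos (fun i _ => one_div_pos.mpr (hv2 i)) (univ_nonempty_iff.mpr ⟨⟨0, hm⟩⟩)
  have hterm_nonneg : ∀ W : ∀ i, Matrix (Fin (k i)) (Fin d) ℂ, ∀ i ∈ univ,
      0 ≤ frob ((W i)ᴴ * V i - (V i)ᴴ * V i) ^ 2 / v i ^ 2 := fun W i _ =>
    div_nonneg (sq_nonneg _) (hv2 i).le
  have hdefect := fun W hW => sum_frob_sq_conjTranspose_mul_sub_div_le hv2 hproj hprot hconst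
    (W := W) hW (hfrob_le W)
  refine ⟨fun i => by rw [hprot, inv_one, Matrix.mul_one], hprot, fun W hW => ?_,
    fun W hW hopt => funext fun i => ?_⟩
  · have h := (sum_nonneg (hterm_nonneg W)).trans (hdefect W hW)
    rw [hNV, ← pow_le_pow_iff_left₀ hc (hN_nonneg W) two_ne_zero]
    nlinarith
  · have hle : N W ^ 2 - c ^ 2 ≤ 0 := by nlinarith [hNV ▸ hopt V hprot, hN_nonneg W]
    have hi := (sum_eq_zero_iff_of_nonneg (hterm_nonneg W)).mp
      (le_antisymm ((hdefect W hW).trans (mul_nonpos_of_nonpos_of_nonneg hle ht.le))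
        (sum_nonneg (hterm_nonneg W))) i (mem_univ i)
    rw [div_eq_zero_iff, or_iff_left (hv2 i).ne', sq_eq_zero_iff, frob_eq_zero_iff,
      sub_eq_zero] at hi
    exact eq_of_conjTranspose_mul_eq (by exact_mod_cast (hv2 i).ne') (hproj i) hi

/-- a projective protocol (`S_V = I`) with
`‖Vᵢᴴ Vᵢ‖_F = vᵢ² √kᵢ = c` constant in `i` is its own canonical dual, and it is
the unique dual minimizing the worst-case error `maxᵢ ‖Wᵢᴴ Vᵢ‖_F`. -/
theorem projective_protocol_self_dual_optimal_wce
    {d m : ℕ} (hm : 0 < m) (k : Fin m → ℕ)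
    (V : ∀ i, Matrix (Fin (k i)) (Fin d) ℂ)
    (v : Fin m → ℝ) (hv : ∀ i, 0 < v i)
    (hproj : ∀ i, V i * (V i)ᴴ = (((v i) ^ 2 : ℝ) : ℂ) • 1)
    (hprot : (∑ i, (V i)ᴴ * V i) = 1)
    (c : ℝ)
    (hconst : ∀ i, frob ((V i)ᴴ * V i) = c)
    (hval : ∀ i, frob ((V i)ᴴ * V i) = (v i) ^ 2 * Real.sqrt (k i))
    (N : (∀ i, Matrix (Fin (k i)) (Fin d) ℂ) → ℝ)
    (hN : ∀ W, N W = Finset.univ.sup'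
      (Finset.univ_nonempty_iff.mpr ⟨⟨0, hm⟩⟩) (fun i => frob ((W i)ᴴ * V i))) :
    -- `V` is its own canonical dual
    (∀ i, V i * (∑ j, (V j)ᴴ * V j)⁻¹ = V i) ∧
    (∑ i, (V i)ᴴ * V i) = 1 ∧
    (∀ W : ∀ i, Matrix (Fin (k i)) (Fin d) ℂ, (∑ i, (W i)ᴴ * V i) = 1 →
      N V ≤ N W) ∧
    (∀ W : ∀ i, Matrix (Fin (k i)) (Fin d) ℂ, (∑ i, (W i)ᴴ * V i) = 1 →
      (∀ W' : ∀ i, Matrix (Fin (k i)) (Fin d) ℂ,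
        (∑ i, (W' i)ᴴ * V i) = 1 → N W ≤ N W') → W = V) :=
  projective_protocol_self_dual_optimal_wce_general hm k V v hv hproj hprot c hconst N hN
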